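/- arXiv:2007.13810 — 6 statements merged into one kernel-verified Lean document; each statement's English description precedes it below -/
import Mathlib

section
/- Let R be a commutative ring of prime characteristic p and let S be a module-finite R-algebra. Then the trace ideal τ_{S/R} is a compatible ideal of R; that is, for every integer e ≥ 1 and every p^{-e}-linear map φ : R → R one has φ(τ_{S/R}) ⊆ τ_{S/R}. -/
/-- A `p^{-e}`-linear map on `R`: additive and `φ (r^{p^e} * x) = r * φ x`. -/
def IsPInvLinear {R : Type*} [CommRing R] (p e : ℕ) (φ : R → R) : Prop :=
  (∀ x y : R, φ (x + y) = φ x + φ y) ∧ ∀ r x : R, φ (r ^ p ^ e * x) = r * φ x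

/-- An ideal is compatible if it is preserved by every `p^{-e}`-linear map, `e ≥ 1`. -/
def CompatibleIdeal {R : Type*} [CommRing R] (p : ℕ) (I : Ideal R) : Prop :=
  ∀ e : ℕ, 1 ≤ e → ∀ φ : R → R, IsPInvLinear p e φ → ∀ x ∈ I, φ x ∈ I

/-- The trace ideal `τ_{S/R}`: the image of the evaluation-at-1 map `Hom_R(S,R) → R`. -/
def traceIdeal (R S : Type*) [CommRing R] [CommRing S] [Algebra R S] : Ideal R :=
  LinearMap.range ((LinearMap.applyₗ (1 : S)) : (S →ₗ[R] R) →ₗ[R] R)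

theorem trace_ideal_is_compatible (p : ℕ) [Fact p.Prime]
    (R S : Type*) [CommRing R] [CharP R p] [CommRing S] [Algebra R S]
    [Module.Finite R S] :
    CompatibleIdeal p (traceIdeal R S) := by
  intro e _he φ hφ x hx
  obtain ⟨haddφ, hmulφ⟩ := hφ
  have hpe : p ^ e ≠ 0 := pow_ne_zero e (Fact.out (p := p.Prime)).pos.ne'
  have hφ0 : φ 0 = 0 := by
    have h := hmulφ 0 0
    rwa [zero_pow hpe, zero_mul, zero_mul] at h
  obtain ⟨f, hf⟩ := hx
  by_cases hS : Nontrivial S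
  · haveI : CharP S p := by
      have hp0 : (p : S) = 0 := by
        rw [show ((p : S)) = algebraMap R S (p : R) from (map_natCast (algebraMap R S) p).symm,
          CharP.cast_eq_zero R p, map_zero]
      exact (CharP.charP_iff_prime_eq_zero (Fact.out (p := p.Prime))).mpr hp0
    refine ⟨{ toFun := fun s => φ (f (s ^ p ^ e)),
              map_add' := ?_, map_smul' := ?_ }, ?_⟩
    · intro s t
      show φ (f ((s + t) ^ p ^ e)) = φ (f (s ^ p ^ e)) + φ (f (t ^ p ^ e))
      rw [add_pow_char_pow, map_add, haddφ]
    · intro r s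
      show φ (f ((r • s) ^ p ^ e)) = r • φ (f (s ^ p ^ e))
      rw [smul_pow, ← algebraMap_smul S (r ^ p ^ e) (s ^ p ^ e), algebraMap_smul,
        map_smul, smul_eq_mul, hmulφ, smul_eq_mul]
    · show φ (f (1 ^ p ^ e)) = φ x
      rw [one_pow, show f 1 = x from hf]
  · have : (1 : S) = 0 := by
      by_contra h
      exact hS ⟨⟨1, 0, h⟩⟩
    have hx0 : x = 0 := by rw [← hf]; show f 1 = 0; rw [this, map_zero]
    rw [hx0, hφ0]
    exact (traceIdeal R S).zero_mem
end

section
/- Let R be a commutative ring of prime characteristic p that is Frobenius split. Then every compatible ideal I of R is a radical ideal. -/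
/-- `R` is Frobenius split if there is a `p^{-1}`-linear map sending `1` to `1`. -/
def FrobeniusSplit (R : Type*) [CommRing R] (p : ℕ) : Prop :=
  ∃ φ : R → R, IsPInvLinear p 1 φ ∧ φ 1 = 1

theorem compatible_ideal_isRadical (p : ℕ) [Fact p.Prime]
    (R : Type*) [CommRing R] [CharP R p]
    (hR : FrobeniusSplit R p) (I : Ideal R) (hI : CompatibleIdeal p I) :
    I.IsRadical := by
  obtain ⟨φ, hφ, hφ1⟩ := hR
  rw [Ideal.isRadical_iff_pow_one_lt p (Fact.out : p.Prime).one_lt]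
  intro x hx
  have key : φ (x ^ p) = x := by
    have := hφ.2 x 1
    simpa [pow_one, hφ1] using this
  have := hI 1 le_rfl φ hφ (x ^ p) hx
  rwa [key] at this
end

section
/- Let R be a commutative ring of prime characteristic p that is Frobenius split and let S be a module-finite R-algebra. Then the trace ideal τ_{S/R} is a radical ideal of R. -/
/-! If `φ` splits Frobenius and `f : S → R` is `R`-linear with `f 1 = r ^ p`, then
`s ↦ φ (f (s ^ p))` is again `R`-linear and sends `1` to `φ (r ^ p) = r`. Hence `r ^ p ∈ τ_{S/R}`
forces `r ∈ τ_{S/R}`, which for `p > 1` already makes `τ_{S/R}` radical. -/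

theorem add_pow_prime_of_natCast_eq_zero {S : Type*} [CommSemiring S] {p : ℕ} (hp : p.Prime)
    (hpS : (p : S) = 0) (x y : S) : (x + y) ^ p = x ^ p + y ^ p := by
  obtain ⟨c, hc⟩ := exists_add_pow_prime_eq hp x y
  simp [hc, hpS]

section

variable {p : ℕ} [Fact p.Prime] {R S : Type*} [CommRing R] [CharP R p] [CommRing S] [Algebra R S]

def IsPInvLinear.compFrobenius {φ : R → R} (hφ : IsPInvLinear p 1 φ) (f : S →ₗ[R] R) :
    S →ₗ[R] R where
  toFun s := φ (f (s ^ p))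
  map_add' x y := by
    have hpS : (p : S) = 0 := by
      rw [← map_natCast (algebraMap R S), CharP.cast_eq_zero, map_zero]
    rw [add_pow_prime_of_natCast_eq_zero Fact.out hpS, map_add, hφ.1]
  map_smul' a s := by
    simpa only [smul_pow, map_smul, smul_eq_mul, RingHom.id_apply, pow_one]
      using hφ.2 a (f (s ^ p))

theorem FrobeniusSplit.mem_traceIdeal_of_pow_mem (hR : FrobeniusSplit R p) {r : R}
    (h : r ^ p ∈ traceIdeal R S) : r ∈ traceIdeal R S := by
  obtain ⟨φ, hφ, hφ1⟩ := hR
  obtain ⟨f, hf : f 1 = r ^ p⟩ := h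
  refine ⟨hφ.compFrobenius f, ?_⟩
  calc φ (f (1 ^ p)) = φ (r ^ p ^ 1 * 1) := by rw [one_pow, hf, pow_one, mul_one]
    _ = r := by rw [hφ.2, hφ1, mul_one]

end

theorem trace_ideal_isRadical_general (p : ℕ) [Fact p.Prime]
    (R S : Type*) [CommRing R] [CharP R p] [CommRing S] [Algebra R S]
    (hR : FrobeniusSplit R p) :
    (traceIdeal R S).IsRadical :=
  (Ideal.isRadical_iff_pow_one_lt p (Fact.out : p.Prime).one_lt).2 fun _ ↦
    hR.mem_traceIdeal_of_pow_mem

theorem trace_ideal_isRadical (p : ℕ) [Fact p.Prime]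
    (R S : Type*) [CommRing R] [CharP R p] [CommRing S] [Algebra R S]
    [Module.Finite R S] (hR : FrobeniusSplit R p) :
    (traceIdeal R S).IsRadical :=
  trace_ideal_isRadical_general p R S hR
end

section
/- Let R be a commutative ring of prime characteristic p, let e ≥ 1, and let φ : R → R be a surjective p^{-e}-linear map. If I ⊆ R is an ideal with φ(I) ⊆ I, then φ(I) = I; that is, every ideal compatible with a surjective p^{-e}-linear map is fixed by it. -/
theorem compatible_with_surjective_is_fixed (p : ℕ) [Fact p.Prime]
    (R : Type*) [CommRing R] [CharP R p]
    (e : ℕ) (he : 1 ≤ e) (φ : R → R) (hφ : IsPInvLinear p e φ)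
    (hsurj : Function.Surjective φ)
    (I : Ideal R) (hI : φ '' (I : Set R) ⊆ (I : Set R)) :
    φ '' (I : Set R) = (I : Set R) := by
  refine Set.Subset.antisymm hI ?_
  intro y hy
  obtain ⟨x, hx⟩ := hsurj 1
  refine ⟨y ^ p ^ e * x, ?_, ?_⟩
  · exact I.mul_mem_right x (I.pow_mem_of_mem hy _ (pow_pos (Fact.out (p := p.Prime)).pos e))
  · rw [hφ.2, hx, mul_one]
end

section
/- Let R be a Noetherian commutative ring, S a module-finite R-algebra, and W ⊆ R a multiplicative submonoid. Then the trace ideal of the localized extension W^{-1}R → W^{-1}S equals the localization of the trace ideal: τ_{W^{-1}S / W^{-1}R} = W^{-1}(τ_{S/R}) as ideals of W^{-1}R. -/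
section

variable {R S : Type*} [CommRing R] [CommRing S] [Algebra R S]
  {Rₚ Sₚ : Type*} [CommRing Rₚ] [CommRing Sₚ] [Algebra R Rₚ] [Algebra S Sₚ] [Algebra R Sₚ]
  [IsScalarTower R S Sₚ]

theorem isLocalizedModule_map_apply_one (W : Submonoid R) [IsLocalization W Rₚ]
    [IsLocalization (Algebra.algebraMapSubmonoid S W) Sₚ] (f : S →ₗ[R] R) :
    IsLocalizedModule.map W (IsScalarTower.toAlgHom R S Sₚ).toLinearMap
      (Algebra.linearMap R Rₚ) f 1 = algebraMap R Rₚ (f 1) := by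
  simpa using IsLocalizedModule.map_apply W (IsScalarTower.toAlgHom R S Sₚ).toLinearMap
    (Algebra.linearMap R Rₚ) f 1

variable [Algebra Rₚ Sₚ] [IsScalarTower R Rₚ Sₚ]

theorem traceIdeal_map_le (W : Submonoid R) [IsLocalization W Rₚ]
    [IsLocalization (Algebra.algebraMapSubmonoid S W) Sₚ] :
    (traceIdeal R S).map (algebraMap R Rₚ) ≤ traceIdeal Rₚ Sₚ := by
  rw [Ideal.map_le_iff_le_comap]
  rintro _ ⟨f, rfl⟩
  exact ⟨(IsLocalizedModule.map W (IsScalarTower.toAlgHom R S Sₚ).toLinearMap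
    (Algebra.linearMap R Rₚ) f).extendScalarsOfIsLocalization W Rₚ,
    isLocalizedModule_map_apply_one W f⟩

theorem traceIdeal_le_map [Module.FinitePresentation R S] (W : Submonoid R)
    [IsLocalization W Rₚ] [IsLocalization (Algebra.algebraMapSubmonoid S W) Sₚ] :
    traceIdeal Rₚ Sₚ ≤ (traceIdeal R S).map (algebraMap R Rₚ) := by
  rintro _ ⟨g, rfl⟩
  have := Module.FinitePresentation.isLocalizedModule_map W
    (IsScalarTower.toAlgHom R S Sₚ).toLinearMap (Algebra.linearMap R Rₚ)
  obtain ⟨⟨f, w⟩, hfw⟩ := IsLocalizedModule.surj W (IsLocalizedModule.map W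
    (IsScalarTower.toAlgHom R S Sₚ).toLinearMap (Algebra.linearMap R Rₚ)) (g.restrictScalars R)
  have hg : g 1 * algebraMap R Rₚ w = algebraMap R Rₚ (f 1) := by
    rw [← isLocalizedModule_map_apply_one (Sₚ := Sₚ) W f, ← hfw, mul_comm, ← Algebra.smul_def]
    rfl
  exact (IsLocalization.mem_map_algebraMap_iff W Rₚ).2 ⟨(⟨f 1, f, rfl⟩, w), hg⟩

end

/-- The trace ideal commutes with localization: `τ_{W⁻¹S/W⁻¹R} = W⁻¹(τ_{S/R})`. -/
theorem trace_ideal_localization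
    (R S : Type*) [CommRing R] [IsNoetherianRing R] [CommRing S] [Algebra R S]
    [Module.Finite R S] (W : Submonoid R)
    (Rₚ Sₚ : Type*) [CommRing Rₚ] [CommRing Sₚ]
    [Algebra R Rₚ] [IsLocalization W Rₚ]
    [Algebra S Sₚ] [IsLocalization (Algebra.algebraMapSubmonoid S W) Sₚ]
    [Algebra Rₚ Sₚ] [Algebra R Sₚ] [IsScalarTower R Rₚ Sₚ] [IsScalarTower R S Sₚ] :
    traceIdeal Rₚ Sₚ = (traceIdeal R S).map (algebraMap R Rₚ) := by
  have := Module.finitePresentation_of_finite R S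
  exact le_antisymm (traceIdeal_le_map W) (traceIdeal_map_le W)
end

section
/- Let R be a Noetherian commutative ring, S a module-finite R-algebra, and Q a prime ideal of R. Then the trace ideal τ_{S/R} is not contained in Q if and only if the map R_Q → S_Q splits as a map of R_Q-modules, i.e., there exists an R_Q-linear map f : S_Q → R_Q with f(1) = 1. -/
/-- `τ_{S/R} ⊄ Q` iff `R_Q → S_Q` splits as a map of `R_Q`-modules. -/
theorem trace_ideal_not_le_prime_iff_split
    (R S : Type*) [CommRing R] [IsNoetherianRing R] [CommRing S] [Algebra R S]
    [Module.Finite R S] (Q : Ideal R) [Q.IsPrime]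
    (Rₚ Sₚ : Type*) [CommRing Rₚ] [CommRing Sₚ]
    [Algebra R Rₚ] [IsLocalization.AtPrime Rₚ Q]
    [Algebra S Sₚ] [IsLocalization (Algebra.algebraMapSubmonoid S Q.primeCompl) Sₚ]
    [Algebra Rₚ Sₚ] [Algebra R Sₚ] [IsScalarTower R Rₚ Sₚ] [IsScalarTower R S Sₚ] :
    ¬ traceIdeal R S ≤ Q ↔ ∃ f : Sₚ →ₗ[Rₚ] Rₚ, f 1 = 1 := by
  haveI hfp : Module.FinitePresentation R S := Module.finitePresentation_of_finite R S
  set M := Q.primeCompl with hM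
  let fS : S →ₗ[R] Sₚ := (IsScalarTower.toAlgHom R S Sₚ).toLinearMap
  let fR : R →ₗ[R] Rₚ := Algebra.linearMap R Rₚ
  let F : (S →ₗ[R] R) →ₗ[R] (Sₚ →ₗ[Rₚ] Rₚ) :=
    IsLocalizedModule.mapExtendScalars M fS fR Rₚ
  haveI hF : IsLocalizedModule M F :=
    Module.FinitePresentation.isLocalizedModule_mapExtendScalars M fS fR Rₚ
  have hF1 : ∀ g : S →ₗ[R] R, F g 1 = algebraMap R Rₚ (g 1) := by
    intro g
    have h2 := IsLocalizedModule.map_apply M fS fR g 1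
    simp only [fS, fR, AlgHom.toLinearMap_apply, map_one, Algebra.linearMap_apply] at h2
    simpa [F] using h2
  constructor
  · intro h
    obtain ⟨x, hx, hxQ⟩ := SetLike.not_le_iff_exists.mp h
    obtain ⟨g, hg⟩ := hx
    have hg1 : g 1 = x := hg
    have hu : IsUnit (algebraMap R Rₚ (g 1)) := by
      rw [hg1]; exact IsLocalization.map_units Rₚ (⟨x, hxQ⟩ : Q.primeCompl)
    refine ⟨hu.unit⁻¹ • F g, ?_⟩
    rw [LinearMap.smul_apply, hF1 g, Units.smul_def]
    exact hu.val_inv_mul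
  · rintro ⟨f, hf⟩
    obtain ⟨⟨g, s⟩, hs⟩ := IsLocalizedModule.surj M F f
    have h1 : (s • f) 1 = F g 1 := LinearMap.congr_fun hs 1
    rw [LinearMap.smul_apply, hf, hF1 g] at h1
    rw [Submonoid.smul_def, Algebra.smul_def, mul_one] at h1
    have hsu : IsUnit (algebraMap R Rₚ (g 1)) := h1 ▸ IsLocalization.map_units Rₚ s
    have hgQ : g 1 ∉ Q := (IsLocalization.AtPrime.isUnit_to_map_iff Rₚ Q (g 1)).mp hsu
    intro hle
    exact hgQ (hle ⟨g, rfl⟩)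
end
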